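/- Let ℓ be a natural number and let q̄(w) = Σ_{k=0}^{ℓ} binom(−1/2, k)·(−2)^k·w^{ℓ−k}, i.e. the polynomial part of the Laurent expansion of w^ℓ·(1 − 2/w)^{−1/2} at w = ∞. Then (2ℓ+1)·(w−2)·q̄(w) − w·q̄(w) − 2·w·(w−2)·q̄′(w) is the constant polynomial with value binom(−1/2, ℓ)·(−2)^{ℓ+1}·(2ℓ+1). -/

import Mathlib

/-!
Write `c k = binom(−1/2, k)·(−2)^k`, so that `q̄_{ℓ+1} = w·q̄_ℓ + c (ℓ+1)` and
`(k+1)·c (k+1) = (2k+1)·c k`. Denoting the left-hand side by `L_ℓ`, the derivative terms cancel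
and `L_{ℓ+1} = w·L_ℓ + c (ℓ+1)·((2ℓ+2)·w − 2(2ℓ+3))`. By the recurrence for `c`, the constant
`L_ℓ = −2(2ℓ+1)·c ℓ` equals `−2(ℓ+1)·c (ℓ+1)`, which kills the `w`-term; induction on `ℓ` concludes.
-/

open Polynomial Finset

/-- The generalized binomial coefficient `binom(−1/2, k)`. -/
noncomputable def gbinom (k : ℕ) : ℂ :=
  (∏ j ∈ Finset.range k, ((-1/2 : ℂ) - j)) / (Nat.factorial k)

/-- `q̄(w) = Σ_{k=0}^{ℓ} binom(−1/2,k)(−2)^k w^{ℓ−k}`. -/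
noncomputable def qbar (ℓ : ℕ) : Polynomial ℂ :=
  ∑ k ∈ Finset.range (ℓ + 1), C (gbinom k * (-2 : ℂ) ^ k) * X ^ (ℓ - k)

theorem gbinom_succ_mul (k : ℕ) : gbinom (k + 1) * ((k : ℂ) + 1) = gbinom k * (-1/2 - k) := by
  have hk : (k : ℂ) + 1 ≠ 0 := Nat.cast_add_one_ne_zero k
  have hfact : (k.factorial : ℂ) ≠ 0 := by exact_mod_cast k.factorial_ne_zero
  simp only [gbinom, prod_range_succ, Nat.factorial_succ, Nat.cast_mul, Nat.cast_add,
    Nat.cast_one]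
  field_simp

theorem gbinom_mul_neg_two_pow_succ (k : ℕ) :
    gbinom (k + 1) * (-2 : ℂ) ^ (k + 1) * ((k : ℂ) + 1)
      = gbinom k * (-2 : ℂ) ^ k * (2 * (k : ℂ) + 1) := by
  linear_combination (-2 : ℂ) ^ (k + 1) * gbinom_succ_mul k

theorem qbar_succ (ℓ : ℕ) :
    qbar (ℓ + 1) = X * qbar ℓ + C (gbinom (ℓ + 1) * (-2 : ℂ) ^ (ℓ + 1)) := by
  rw [qbar, sum_range_succ, Nat.sub_self, pow_zero, mul_one, qbar, mul_sum]
  congr 1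
  refine sum_congr rfl fun k hk => ?_
  rw [Nat.succ_sub (Nat.lt_succ_iff.mp (mem_range.mp hk)), pow_succ]
  ring

theorem stmt1 (ℓ : ℕ) :
    C (2 * (ℓ : ℂ) + 1) * ((X - C 2) * qbar ℓ) - X * qbar ℓ
        - C 2 * X * (X - C 2) * derivative (qbar ℓ)
      = C (gbinom ℓ * (-2 : ℂ) ^ (ℓ + 1) * (2 * (ℓ : ℂ) + 1)) := by
  induction ℓ with
  | zero => simp [qbar, gbinom]
  | succ ℓ ih =>
    have hrec := congrArg C (gbinom_mul_neg_two_pow_succ ℓ)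
    rw [qbar_succ, derivative_add, derivative_mul, derivative_X, derivative_C, one_mul, add_zero]
    simp only [map_mul, map_add, map_pow, map_neg, map_ofNat, map_one, Nat.cast_add,
      Nat.cast_one, C_eq_natCast] at ih hrec ⊢
    linear_combination X * ih + 2 * X * hrec
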